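/- With N_l as above, for all l, l' in {0,...,m-1}: N_l N_{l'} = I_{n+1} ⊗ (m J_m + n U^{l−l'}) + (2 + (n−1)/m) (J_{n+1} − I_{n+1}) ⊗ J_m. -/
import Mathlib


open Matrix Kronecker BigOperators
open scoped Classical

noncomputable section

/-- The `m × m` circulant shift matrix. -/
def shiftU (m : ℕ) : Matrix (ZMod m) (ZMod m) ℝ :=
  Matrix.of fun i j => if j = i + 1 then 1 else 0

/-- The `m × m` back-diagonal (exchange) matrix. -/
def exchR (m : ℕ) : Matrix (ZMod m) (ZMod m) ℝ :=
  Matrix.of fun i j => if i + j = -1 then 1 else 0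

/-- All-ones matrix. -/
def Jmat (ι : Type*) : Matrix ι ι ℝ := Matrix.of fun _ _ => 1

/-- `W = (w i j)` is a symmetric `BGW(n+1, n, n-1)` with zero diagonal over the cyclic
group generated by the shift matrix `U` of order `m`: it is symmetric, has zero diagonal,
off-diagonal entries are powers of `U`, and the balance condition holds. -/
def IsSymBGW (m n : ℕ) [NeZero m]
    (w : Fin (n + 1) → Fin (n + 1) → Matrix (ZMod m) (ZMod m) ℝ) : Prop :=
  (∀ i j, w i j = w j i) ∧
  (∀ i, w i i = 0) ∧
  (∀ i j, i ≠ j → ∃ k : ℕ, w i j = shiftU m ^ k) ∧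
  (∀ i h : Fin (n + 1), i ≠ h → ∀ g : ZMod m,
    (Finset.univ.filter fun j =>
        w i j ≠ 0 ∧ w h j ≠ 0 ∧ w i j * (w h j)ᵀ = shiftU m ^ g.val).card = (n - 1) / m)

/-- The block matrix `N_l` with diagonal blocks `J_m` and `(i,j)`-block `w_{ij} Uˡ R`. -/
def NBGW (m n : ℕ) [NeZero m]
    (w : Fin (n + 1) → Fin (n + 1) → Matrix (ZMod m) (ZMod m) ℝ) (l : ZMod m) :
    Matrix (Fin (n + 1) × ZMod m) (Fin (n + 1) × ZMod m) ℝ :=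
  Matrix.of fun p q =>
    if p.1 = q.1 then 1 else (w p.1 q.1 * shiftU m ^ l.val * exchR m) p.2 q.2

end

noncomputable section

def Smat (m : ℕ) (z : ZMod m) : Matrix (ZMod m) (ZMod m) ℝ :=
  Matrix.of fun i j => if j = i + z then 1 else 0

def Tmat (m : ℕ) (z : ZMod m) : Matrix (ZMod m) (ZMod m) ℝ :=
  Matrix.of fun i j => if i + z + j = -1 then 1 else 0

variable {m : ℕ} [NeZero m]

lemma Smat_apply (z : ZMod m) (i j : ZMod m) : Smat m z i j = if j = i + z then 1 else 0 := rfl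
lemma Tmat_apply (z : ZMod m) (i j : ZMod m) : Tmat m z i j = if i + z + j = -1 then 1 else 0 := rfl
lemma Jmat_apply {ι : Type*} (i j : ι) : Jmat ι i j = 1 := rfl

lemma Smat_mul_Smat (z z' : ZMod m) : Smat m z * Smat m z' = Smat m (z + z') := by
  ext i j
  rw [Matrix.mul_apply]
  simp only [Smat_apply, ite_mul, one_mul, zero_mul]
  rw [Finset.sum_ite_eq' Finset.univ (i + z) (fun c => if j = c + z' then (1:ℝ) else 0)]
  simp [add_assoc]

lemma Smat_mul_exchR (z : ZMod m) : Smat m z * exchR m = Tmat m z := by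
  ext i j
  rw [Matrix.mul_apply]
  simp only [Smat_apply, exchR, Matrix.of_apply, ite_mul, one_mul, zero_mul]
  rw [Finset.sum_ite_eq' Finset.univ (i + z) (fun c => if c + j = -1 then (1:ℝ) else 0)]
  simp [Tmat_apply]

lemma Tmat_mul_Tmat (z z' : ZMod m) : Tmat m z * Tmat m z' = Smat m (z - z') := by
  ext i j
  rw [Matrix.mul_apply]
  have h1 : ∀ c : ZMod m, (i + z + c = -1) ↔ (c = -1 - (i + z)) := by
    intro c; constructor <;> intro hh <;> linear_combination hh
  simp only [Tmat_apply, h1, ite_mul, one_mul, zero_mul]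
  rw [Finset.sum_ite_eq' Finset.univ (-1 - (i + z)) (fun c => if c + z' + j = -1 then (1:ℝ) else 0)]
  have h2 : ((-1 - (i + z)) + z' + j = -1) ↔ (j = i + (z - z')) := by
    constructor <;> intro hh <;> linear_combination hh
  simp [Smat_apply, h2]

lemma Jmat_mul_Jmat : Jmat (ZMod m) * Jmat (ZMod m) = (m : ℝ) • Jmat (ZMod m) := by
  ext i j
  simp [Jmat, Matrix.mul_apply, Finset.sum_const, ZMod.card]

lemma Jmat_mul_Tmat (z : ZMod m) : Jmat (ZMod m) * Tmat m z = Jmat (ZMod m) := by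
  ext i j
  rw [Matrix.mul_apply]
  have h1 : ∀ c : ZMod m, (c + z + j = -1) ↔ (c = -1 - (z + j)) := by
    intro c; constructor <;> intro hh <;> linear_combination hh
  simp only [Jmat_apply, Tmat_apply, h1, one_mul]
  rw [Finset.sum_ite_eq' Finset.univ (-1 - (z + j)) (fun _ => (1:ℝ))]
  simp

lemma Tmat_mul_Jmat (z : ZMod m) : Tmat m z * Jmat (ZMod m) = Jmat (ZMod m) := by
  ext i j
  rw [Matrix.mul_apply]
  have h1 : ∀ c : ZMod m, (i + z + c = -1) ↔ (c = -1 - (i + z)) := by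
    intro c; constructor <;> intro hh <;> linear_combination hh
  simp only [Jmat_apply, Tmat_apply, h1, mul_one]
  rw [Finset.sum_ite_eq' Finset.univ (-1 - (i + z)) (fun _ => (1:ℝ))]
  simp

lemma shiftU_pow (k : ℕ) : shiftU m ^ k = Smat m (k : ZMod m) := by
  induction k with
  | zero => ext i j; simp [Smat_apply, Matrix.one_apply, eq_comm]
  | succ k ih =>
      have : shiftU m = Smat m 1 := rfl
      rw [pow_succ, ih, this, Smat_mul_Smat]
      push_cast
      rfl

lemma shiftU_pow_val (z : ZMod m) : shiftU m ^ z.val = Smat m z := by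
  rw [shiftU_pow, ZMod.natCast_val, ZMod.cast_id]

lemma Smat_transpose (z : ZMod m) : (Smat m z)ᵀ = Smat m (-z) := by
  ext i j
  simp only [Matrix.transpose_apply, Smat_apply]
  have : (i = j + z) ↔ (j = i + -z) := by
    constructor <;> intro hh <;> linear_combination -hh
  simp only [this]

lemma Smat_inj {z z' : ZMod m} (h : Smat m z = Smat m z') : z = z' := by
  by_contra hne
  have h1 : Smat m z 0 z = Smat m z' 0 z := by rw [h]
  simp [Smat_apply, hne] at h1

lemma Smat_ne_zero (z : ZMod m) : Smat m z ≠ 0 := by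
  intro h
  have h1 : Smat m z 0 z = 0 := by rw [h]; rfl
  simp [Smat_apply] at h1

end

/-- `N_l N_{l'} = I_{n+1} ⊗ (m J_m + n U^{l-l'}) + (2 + (n-1)/m)(J_{n+1} - I_{n+1}) ⊗ J_m`. -/
theorem NBGW_mul (m n : ℕ) [NeZero m] (hmn : m ∣ n - 1)
    (w : Fin (n + 1) → Fin (n + 1) → Matrix (ZMod m) (ZMod m) ℝ)
    (hW : IsSymBGW m n w) :
    ∀ l l' : ZMod m,
      NBGW m n w l * NBGW m n w l'
        = (1 : Matrix (Fin (n + 1)) (Fin (n + 1)) ℝ)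
            ⊗ₖ ((m : ℝ) • Jmat (ZMod m) + (n : ℝ) • shiftU m ^ (l - l').val)
          + ((2 : ℝ) + ((n : ℝ) - 1) / (m : ℝ)) •
              ((Jmat (Fin (n + 1)) - 1) ⊗ₖ Jmat (ZMod m)) := by
  obtain ⟨hsym, hdiag, hpow, hbal⟩ := hW
  intro l l'
  have hS : ∀ (i j : Fin (n+1)), i ≠ j → ∃ z : ZMod m, w i j = Smat m z := by
    intro i j hij
    obtain ⟨k, hk⟩ := hpow i j hij
    exact ⟨(k : ZMod m), by rw [hk, shiftU_pow]⟩
  ext ⟨i, a⟩ ⟨h, b⟩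
  rw [Matrix.mul_apply, Fintype.sum_prod_type]
  have hone : ∀ (l0 : ZMod m) (p q : Fin (n+1) × ZMod m),
      NBGW m n w l0 p q =
        (if p.1 = q.1 then Jmat (ZMod m) else w p.1 q.1 * shiftU m ^ l0.val * exchR m) p.2 q.2 := by
    intro l0 p q
    by_cases hpq : p.1 = q.1 <;> simp [NBGW, hpq, Jmat]
  simp only [hone]
  set F : Fin (n+1) → ℝ := fun j =>
      ((if i = j then Jmat (ZMod m) else w i j * shiftU m ^ l.val * exchR m) *
       (if j = h then Jmat (ZMod m) else w j h * shiftU m ^ l'.val * exchR m)) a b with hF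
  have hinner : ∀ j : Fin (n+1),
      (∑ c : ZMod m,
        (if i = j then Jmat (ZMod m) else w i j * shiftU m ^ l.val * exchR m) a c *
        (if j = h then Jmat (ZMod m) else w j h * shiftU m ^ l'.val * exchR m) c b)
      = F j := by
    intro j; simp only [hF]; rw [Matrix.mul_apply]
  rw [Finset.sum_congr rfl (fun j _ => hinner j)]
  by_cases hih : i = h
  · -- diagonal case
    subst hih
    have hterm_i : F i = (m : ℝ) := by
      simp only [hF]
      simp [Jmat_mul_Jmat, Jmat_apply]
    have hrest : ∀ j ∈ Finset.univ.erase i, F j = Smat m (l - l') a b := by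
      intro j hj
      have hji : j ≠ i := Finset.ne_of_mem_erase hj
      obtain ⟨z, hz⟩ := hS i j hji.symm
      have hz' : w j i = Smat m z := by rw [← hsym i j, hz]
      simp only [hF, if_neg (Ne.symm hji), if_neg hji, hz, hz', shiftU_pow_val,
        Smat_mul_Smat, Smat_mul_exchR, Tmat_mul_Tmat]
      rw [show z + l - (z + l') = l - l' from by ring]
    have hcardn : (Finset.univ.erase i).card = n := by
      rw [Finset.card_erase_of_mem (Finset.mem_univ i)]
      simp
    have hLHS : (∑ j : Fin (n+1), F j) = (m : ℝ) + (n : ℝ) * Smat m (l - l') a b := by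
      rw [← Finset.add_sum_erase _ F (Finset.mem_univ i), hterm_i,
        Finset.sum_congr rfl hrest, Finset.sum_const, hcardn, nsmul_eq_mul]
    rw [hLHS]
    simp only [Matrix.add_apply, Matrix.smul_apply, Matrix.kroneckerMap_apply,
      Matrix.one_apply_eq, Matrix.sub_apply, Jmat_apply, shiftU_pow_val, smul_eq_mul]
    ring
  · -- off-diagonal case
    set g₀ : ZMod m := b - a - l + l' with hg₀
    set P : Fin (n+1) → Prop := fun j =>
      w i j ≠ 0 ∧ w h j ≠ 0 ∧ w i j * (w h j)ᵀ = shiftU m ^ g₀.val with hP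
    have hcard := hbal i h hih g₀
    have hsub : ({i, h} : Finset (Fin (n+1))) ⊆ Finset.univ := Finset.subset_univ _
    have hFi : F i = 1 := by
      obtain ⟨z, hz⟩ := hS i h hih
      have hblk : w i h * shiftU m ^ l'.val * exchR m = Tmat m (z + l') := by
        rw [hz, shiftU_pow_val, Smat_mul_Smat, Smat_mul_exchR]
      simp only [hF, eq_self_iff_true, if_true, if_neg hih, hblk, Jmat_mul_Tmat, Jmat_apply]
    have hFh : F h = 1 := by
      obtain ⟨z, hz⟩ := hS i h hih
      have hblk : w i h * shiftU m ^ l.val * exchR m = Tmat m (z + l) := by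
        rw [hz, shiftU_pow_val, Smat_mul_Smat, Smat_mul_exchR]
      simp only [hF, eq_self_iff_true, if_true, if_neg hih, hblk, Tmat_mul_Jmat, Jmat_apply]
    have hrest : ∀ j ∈ Finset.univ \ ({i, h} : Finset (Fin (n+1))),
        F j = if P j then 1 else 0 := by
      intro j hj
      simp only [Finset.mem_sdiff, Finset.mem_insert, Finset.mem_singleton, not_or] at hj
      obtain ⟨-, hji, hjh⟩ := hj
      obtain ⟨z, hz⟩ := hS i j (Ne.symm hji)
      obtain ⟨z', hz'⟩ := hS h j (Ne.symm hjh)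
      have hzjh : w j h = Smat m z' := by rw [hsym j h, hz']
      have hb1 : w i j * shiftU m ^ l.val * exchR m = Tmat m (z + l) := by
        rw [hz, shiftU_pow_val, Smat_mul_Smat, Smat_mul_exchR]
      have hb2 : w j h * shiftU m ^ l'.val * exchR m = Tmat m (z' + l') := by
        rw [hzjh, shiftU_pow_val, Smat_mul_Smat, Smat_mul_exchR]
      have hPiff : P j ↔ z - z' = g₀ := by
        simp only [hP, hz, hz', shiftU_pow_val, Smat_transpose, Smat_mul_Smat]
        constructor
        · rintro ⟨-, -, h3⟩
          have h4 := Smat_inj h3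
          linear_combination h4
        · intro h3
          refine ⟨Smat_ne_zero z, Smat_ne_zero z', ?_⟩
          have h4 : z + -z' = g₀ := by linear_combination h3
          rw [h4]
      have hcond : (b = a + ((z + l) - (z' + l'))) ↔ z - z' = g₀ := by
        rw [hg₀]
        constructor <;> intro hh <;> linear_combination -hh
      simp only [hF, if_neg (Ne.symm hji), if_neg hjh, hb1, hb2, Tmat_mul_Tmat,
        Smat_apply, hcond, hPiff]
    have hPi : ¬ P i := by
      simp only [hP]; simp [hdiag i]
    have hPh : ¬ P h := by
      simp only [hP]; simp [hdiag h]
    have hpair0 : (∑ j ∈ ({i, h} : Finset (Fin (n+1))), if P j then (1:ℝ) else 0) = 0 := by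
      rw [Finset.sum_pair hih, if_neg hPi, if_neg hPh, add_zero]
    have hsum : (∑ j ∈ Finset.univ \ ({i, h} : Finset (Fin (n+1))), if P j then (1:ℝ) else 0)
        = (((n - 1) / m : ℕ) : ℝ) := by
      have h0 := Finset.sum_sdiff (f := fun j => if P j then (1:ℝ) else 0) hsub
      rw [hpair0, add_zero] at h0
      rw [h0, Finset.sum_boole]
      simp only [hP]
      rw [hcard]
    have hLHS : (∑ j : Fin (n+1), F j) = (((n - 1) / m : ℕ) : ℝ) + 2 := by
      rw [← Finset.sum_sdiff hsub, Finset.sum_pair hih, hFi, hFh,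
        Finset.sum_congr rfl hrest, hsum]
      ring
    rw [hLHS]
    have hn : 1 ≤ n := by
      rcases Nat.eq_zero_or_pos n with h0 | h1
      · subst h0
        have hi := i.isLt
        have hh2 := h.isLt
        exact absurd (Fin.ext (by omega : i.val = h.val)) hih
      · exact h1
    have hcast : (((n - 1) / m : ℕ) : ℝ) = ((n : ℝ) - 1) / (m : ℝ) := by
      rw [Nat.cast_div hmn (Nat.cast_ne_zero.mpr (NeZero.ne m)), Nat.cast_sub hn, Nat.cast_one]
    rw [hcast]
    simp only [Matrix.add_apply, Matrix.smul_apply, Matrix.kroneckerMap_apply,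
      Matrix.sub_apply, Jmat_apply, Matrix.one_apply_ne hih, smul_eq_mul]
    ring
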